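/- arXiv:1503.08528 — 6 statements merged into one kernel-verified Lean document; each statement's English description precedes it below -/
import Mathlib

section
/- Let u, z ∈ V and let q ∈ [0,1) be such that at least (1−q)·n of the points v ∈ V satisfy dist(z,v) ≥ dist(z,u) (i.e., u is the (qn)-th closest point of V to z). Assume W(u) > 0 and W(z) > 0. Then for every v ∈ V: max{1/n, dist(u,v)/W(u)} ≥ ((1−q)/4)·dist(z,v)/W(z). -/
/-!
Let `d = dist z u`. Since at least `(1 - q) n` points lie at distance `≥ d` from `z`, Markov's
inequality gives `(1 - q) n d ≤ W(z)`. If `dist z v ≤ 2d`, this bounds `dist z v / W(z)` by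
`2 / ((1 - q) n)`. Otherwise the triangle inequality gives `dist u v ≥ dist z v / 2`, while
`W(u) ≤ W(z) + n d ≤ 2 W(z) / (1 - q)`.
-/

open Finset

theorem Finset.card_filter_le_mul_le_sum {ι R : Type*} [Semiring R] [PartialOrder R]
    [IsOrderedRing R] (s : Finset ι) (f : ι → R) (a : R) [DecidablePred fun x => a ≤ f x]
    (hf : ∀ x ∈ s, 0 ≤ f x) :
    (#(s.filter fun x => a ≤ f x) : R) * a ≤ ∑ x ∈ s, f x :=
  calc (#(s.filter fun x => a ≤ f x) : R) * a
      ≤ ∑ x ∈ s.filter (fun x => a ≤ f x), f x := by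
        simpa using card_nsmul_le_sum _ f a fun x hx => (mem_filter.mp hx).2
    _ ≤ ∑ x ∈ s, f x :=
        sum_le_sum_of_subset_of_nonneg (filter_subset _ _) fun x hx _ => hf x hx

section SumDist

variable {X : Type*} [PseudoMetricSpace X] (V : Finset X)

theorem sum_dist_le_sum_dist_add_card_mul (u z : X) :
    ∑ w ∈ V, dist u w ≤ ∑ w ∈ V, dist z w + #V * dist z u :=
  calc ∑ w ∈ V, dist u w ≤ ∑ w ∈ V, (dist z w + dist z u) :=
        sum_le_sum fun w _ => by linarith [dist_triangle u z w, dist_comm u z]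
    _ = ∑ w ∈ V, dist z w + #V * dist z u := by rw [sum_add_distrib, sum_const, nsmul_eq_mul]

theorem mul_card_mul_dist_le_sum_dist {u z : X} {q : ℝ}
    (hrank : (1 - q) * #V ≤ #(V.filter fun v => dist z u ≤ dist z v)) :
    (1 - q) * #V * dist z u ≤ ∑ w ∈ V, dist z w :=
  calc (1 - q) * #V * dist z u ≤ #(V.filter fun v => dist z u ≤ dist z v) * dist z u :=
        mul_le_mul_of_nonneg_right hrank dist_nonneg
    _ ≤ ∑ w ∈ V, dist z w :=
        V.card_filter_le_mul_le_sum _ _ fun _ _ => dist_nonneg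

variable {V} {u z v : X} {q : ℝ}

theorem div_sum_dist_le_inv_card_of_dist_le (hq : q < 1)
    (hrank : (1 - q) * #V ≤ #(V.filter fun v => dist z u ≤ dist z v))
    (hWz : 0 < ∑ w ∈ V, dist z w) (hv : dist z v ≤ 2 * dist z u) :
    (1 - q) / 4 * (dist z v / ∑ w ∈ V, dist z w) ≤ 1 / #V := by
  have hn : (0 : ℝ) < #V := by exact_mod_cast (nonempty_of_sum_ne_zero hWz.ne').card_pos
  have hq' : 0 ≤ 1 - q := by linarith
  have hscaled : (1 - q) * #V * dist z v ≤ 2 * ∑ w ∈ V, dist z w := by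
    nlinarith [mul_le_mul_of_nonneg_left hv (by positivity : 0 ≤ (1 - q) * #V),
      mul_card_mul_dist_le_sum_dist V hrank]
  rw [mul_div_assoc', div_mul_eq_mul_div, div_le_div_iff₀ (by positivity) hn]
  linarith

theorem div_sum_dist_le_div_sum_dist_of_lt_dist (hq0 : 0 ≤ q) (hq : q < 1)
    (hrank : (1 - q) * #V ≤ #(V.filter fun v => dist z u ≤ dist z v))
    (hWu : 0 < ∑ w ∈ V, dist u w) (hWz : 0 < ∑ w ∈ V, dist z w)
    (hv : 2 * dist z u < dist z v) :
    (1 - q) / 4 * (dist z v / ∑ w ∈ V, dist z w) ≤ dist u v / ∑ w ∈ V, dist u w := by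
  have hWu_le : (1 - q) * ∑ w ∈ V, dist u w ≤ 2 * ∑ w ∈ V, dist z w := by
    nlinarith [sum_dist_le_sum_dist_add_card_mul V u z, mul_card_mul_dist_le_sum_dist V hrank,
      mul_le_mul_of_nonneg_left hWz.le hq0]
  have huv : dist z v ≤ 2 * dist u v := by linarith [dist_triangle z u v]
  rw [mul_div_assoc', div_mul_eq_mul_div, div_le_div_iff₀ (by positivity) hWu]
  nlinarith [mul_le_mul_of_nonneg_left hWu_le (dist_nonneg (x := z) (y := v)),
    mul_le_mul_of_nonneg_left huv hWz.le]

end SumDist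

theorem stmt0_general {X : Type*} [MetricSpace X] (V : Finset X) (u z : X)
    (q : ℝ) (hq0 : 0 ≤ q) (hq1 : q < 1)
    (hrank : (1 - q) * (V.card : ℝ) ≤
      ((V.filter fun v => dist z u ≤ dist z v).card : ℝ))
    (hWu : 0 < ∑ w ∈ V, dist u w) (hWz : 0 < ∑ w ∈ V, dist z w) :
    ∀ v ∈ V,
      (1 - q) / 4 * (dist z v / ∑ w ∈ V, dist z w) ≤
        max (1 / (V.card : ℝ)) (dist u v / ∑ w ∈ V, dist u w) := by
  intro v _
  rcases le_or_gt (dist z v) (2 * dist z u) with hv | hv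
  · exact le_max_of_le_left (div_sum_dist_le_inv_card_of_dist_le hq1 hrank hWz hv)
  · exact le_max_of_le_right (div_sum_dist_le_div_sum_dist_of_lt_dist hq0 hq1 hrank hWu hWz hv)

/-- If `u` is the `(qn)`-th closest point of `V` to `z` (i.e. at least
`(1-q)·n` points `v ∈ V` satisfy `dist z v ≥ dist z u`), then for every `v ∈ V`,
`max{1/n, dist(u,v)/W(u)} ≥ ((1-q)/4)·dist(z,v)/W(z)`. -/
theorem stmt0 {X : Type*} [MetricSpace X] (V : Finset X) (u z : X)
    (hu : u ∈ V) (hz : z ∈ V) (q : ℝ) (hq0 : 0 ≤ q) (hq1 : q < 1)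
    (hrank : (1 - q) * (V.card : ℝ) ≤
      ((V.filter fun v => dist z u ≤ dist z v).card : ℝ))
    (hWu : 0 < ∑ w ∈ V, dist u w) (hWz : 0 < ∑ w ∈ V, dist z w) :
    ∀ v ∈ V,
      (1 - q) / 4 * (dist z v / ∑ w ∈ V, dist z w) ≤
        max (1 / (V.card : ℝ)) (dist u v / ∑ w ∈ V, dist u w) :=
  stmt0_general V u z q hq0 hq1 hrank hWu hWz
end

section
/- Let z ∈ V with W(z) > 0, let c > 0 and k > 0, and let γ : V → ℝ satisfy γ_v ≥ c·dist(z,v)/W(z) for every v ∈ V. For each v set p_v = min{1, k·γ_v}. Then Σ over v ∈ V with dist(z,v) > 0 of (1/p_v − 1)·dist(z,v)² is at most W(z)²/(k·c). (Note that p_v > 0 whenever dist(z,v) > 0.) -/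
/-!
Each term with `dist z v > 0` is bounded separately: since `1 / min 1 x - 1 ≤ 1 / x`, the
weight `1 / p_v - 1` is at most `1 / (k γ_v) ≤ W(z) / (k c dist(z,v))`, so the term is at most
`W(z) / (k c) · dist(z,v)`. Summing, the distances add up to at most `W(z)`.
-/

open Finset

lemma one_div_min_one_sub_one_le {x : ℝ} (hx : 0 < x) : 1 / min 1 x - 1 ≤ 1 / x := by
  rcases le_total 1 x with h | h
  · rw [min_eq_left h, div_one, sub_self]
    positivity
  · rw [min_eq_right h]
    linarith

lemma one_div_min_one_sub_one_mul_sq_le {c k d W γ : ℝ} (hc : 0 < c) (hk : 0 < k) (hd : 0 < d)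
    (hdW : d ≤ W) (hγ : c * (d / W) ≤ γ) :
    (1 / min 1 (k * γ) - 1) * d ^ 2 ≤ W / (k * c) * d := by
  have hW : 0 < W := hd.trans_le hdW
  have hγpos : 0 < γ := lt_of_lt_of_le (by positivity) hγ
  have hcd : c * d ≤ γ * W := by rwa [mul_div_assoc', div_le_iff₀ hW] at hγ
  calc (1 / min 1 (k * γ) - 1) * d ^ 2
      ≤ 1 / (k * γ) * d ^ 2 := by
        gcongr
        exact one_div_min_one_sub_one_le (by positivity)
    _ ≤ W / (k * c) * d := by
        rw [div_mul_eq_mul_div, one_mul, div_mul_eq_mul_div,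
          div_le_div_iff₀ (by positivity) (by positivity)]
        nlinarith [mul_le_mul_of_nonneg_left hcd (by positivity : 0 ≤ k * d)]

theorem stmt1_general {X : Type*} [MetricSpace X] (V : Finset X) (z : X)
    (c k : ℝ) (hc : 0 < c) (hk : 0 < k)
    (γ : X → ℝ) (hγ : ∀ v ∈ V, c * (dist z v / ∑ w ∈ V, dist z w) ≤ γ v) :
    ∑ v ∈ V.filter (fun v => 0 < dist z v),
        (1 / min 1 (k * γ v) - 1) * dist z v ^ 2 ≤
      (∑ w ∈ V, dist z w) ^ 2 / (k * c) := by
  set W := ∑ w ∈ V, dist z w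
  have hdist_le : ∀ v ∈ V, dist z v ≤ W := fun v hv =>
    single_le_sum (f := fun w => dist z w) (fun _ _ => dist_nonneg) hv
  calc ∑ v ∈ V.filter (fun v => 0 < dist z v), (1 / min 1 (k * γ v) - 1) * dist z v ^ 2
      ≤ ∑ v ∈ V.filter (fun v => 0 < dist z v), W / (k * c) * dist z v := by
        refine sum_le_sum fun v hv => ?_
        obtain ⟨hvV, hd⟩ := mem_filter.mp hv
        exact one_div_min_one_sub_one_mul_sq_le hc hk hd (hdist_le v hvV) (hγ v hvV)
    _ = W / (k * c) * ∑ v ∈ V.filter (fun v => 0 < dist z v), dist z v := (mul_sum _ _ _).symm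
    _ ≤ W / (k * c) * W := by
        gcongr
        exact sum_le_sum_of_subset_of_nonneg (filter_subset _ _) fun _ _ _ => dist_nonneg
    _ = W ^ 2 / (k * c) := by ring

/-- If `γ_v ≥ c·dist(z,v)/W(z)` for every `v ∈ V` and `p_v = min{1, k·γ_v}`,
then `Σ_{v ∈ V, dist(z,v) > 0} (1/p_v − 1)·dist(z,v)² ≤ W(z)²/(k·c)`. -/
theorem stmt1 {X : Type*} [MetricSpace X] (V : Finset X) (z : X) (hz : z ∈ V)
    (hWz : 0 < ∑ w ∈ V, dist z w) (c k : ℝ) (hc : 0 < c) (hk : 0 < k)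
    (γ : X → ℝ) (hγ : ∀ v ∈ V, c * (dist z v / ∑ w ∈ V, dist z w) ≤ γ v) :
    ∑ v ∈ V.filter (fun v => 0 < dist z v),
        (1 / min 1 (k * γ v) - 1) * dist z v ^ 2 ≤
      (∑ w ∈ V, dist z w) ^ 2 / (k * c) :=
  stmt1_general V z c k hc hk γ hγ
end

section
/- Let v ∈ V satisfy m(v) = MinMed. Then every point u ∈ V with dist(u,v) ≤ m(v) (in particular, each of the ⌈1+n/2⌉ points of V closest to v) satisfies m(u) ≤ 2·MinMed, i.e., is well positioned. Consequently at least ⌈1+n/2⌉ points of V are well positioned. -/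
/-!
The quantile distance `u ↦ medDist V Q u` is 1-Lipschitz: the closed ball of radius `m(v)`
around `v` lies in the closed ball of radius `dist u v + m(v)` around `u`. Hence every point
within `m(v)` of `v` has `m(u) ≤ 2 m(v)`, and the ball of radius `m(v)` around `v` supplies
the `⌈1+n/2⌉` such points of `V`.
-/

open Finset

/-- The `Q`-quantile distance of `u` to the finite point set `V`: the smallest radius `r`
such that the closed ball of radius `r` around `u` contains at least `Q` points of `V`. -/
noncomputable def medDist {X : Type*} [MetricSpace X] (V : Finset X) (Q : ℕ) (u : X) : ℝ :=
  sInf {r : ℝ | Q ≤ (V.filter fun v => dist u v ≤ r).card}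

/-- The median distance `m(u)`: the `⌈1+n/2⌉`-th smallest distance from `u` to `V`
(where `⌈1+n/2⌉ = (n+1)/2 + 1` using integer division). -/
noncomputable def med {X : Type*} [MetricSpace X] (V : Finset X) (u : X) : ℝ :=
  medDist V ((V.card + 1) / 2 + 1) u

section MedDist

variable {X : Type*} [MetricSpace X] {V : Finset X} {Q : ℕ}

lemma exists_dist_le_filter_dist_le_eq (hQ1 : 1 ≤ Q) {u : X} {r : ℝ}
    (hr : Q ≤ #(V.filter fun v => dist u v ≤ r)) :
    ∃ w ∈ V, dist u w ≤ r ∧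
      V.filter (fun v => dist u v ≤ dist u w) = V.filter fun v => dist u v ≤ r := by
  have hne : (V.filter fun v => dist u v ≤ r).Nonempty := card_pos.mp (by omega)
  obtain ⟨w, hw, hmax⟩ := exists_max_image _ (dist u) hne
  obtain ⟨hwV, hwr⟩ := mem_filter.mp hw
  refine ⟨w, hwV, hwr, ?_⟩
  ext v
  simp only [mem_filter]
  exact ⟨fun ⟨hv, hvw⟩ => ⟨hv, hvw.trans hwr⟩,
    fun ⟨hv, hvr⟩ => ⟨hv, hmax v (mem_filter.mpr ⟨hv, hvr⟩)⟩⟩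

/-- The infimum is attained at the least distance `dist u w`, `w ∈ V`, that is admissible. -/
lemma medDist_isLeast (hQ1 : 1 ≤ Q) (hQ : Q ≤ #V) (u : X) :
    IsLeast {r : ℝ | Q ≤ #(V.filter fun v => dist u v ≤ r)} (medDist V Q u) := by
  set T := V.filter fun w => Q ≤ #(V.filter fun v => dist u v ≤ dist u w)
  have hVne : V.Nonempty := card_pos.mp (by omega)
  obtain ⟨far, -, hfar⟩ := exists_max_image V (dist u) hVne
  have hfarQ : Q ≤ #(V.filter fun v => dist u v ≤ dist u far) := by
    rwa [filter_true_of_mem hfar]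
  have hTne : T.Nonempty := by
    obtain ⟨w, hw, -, heq⟩ := exists_dist_le_filter_dist_le_eq hQ1 hfarQ
    exact ⟨w, mem_filter.mpr ⟨hw, by rwa [heq]⟩⟩
  obtain ⟨w₀, hw₀, hmin⟩ := exists_min_image T (dist u) hTne
  have hleast : IsLeast {r : ℝ | Q ≤ #(V.filter fun v => dist u v ≤ r)} (dist u w₀) := by
    refine ⟨(mem_filter.mp hw₀).2, fun r hr => ?_⟩
    obtain ⟨w, hw, hwr, heq⟩ := exists_dist_le_filter_dist_le_eq hQ1 hr
    exact (hmin w (mem_filter.mpr ⟨hw, by rwa [heq]⟩)).trans hwr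
  rw [medDist, hleast.csInf_eq]
  exact hleast

lemma le_card_filter_dist_le_medDist (hQ1 : 1 ≤ Q) (hQ : Q ≤ #V) (u : X) :
    Q ≤ #(V.filter fun v => dist u v ≤ medDist V Q u) :=
  (medDist_isLeast hQ1 hQ u).1

lemma medDist_le_of_le_card_filter (hQ1 : 1 ≤ Q) (hQ : Q ≤ #V) {u : X} {r : ℝ}
    (hr : Q ≤ #(V.filter fun v => dist u v ≤ r)) : medDist V Q u ≤ r :=
  (medDist_isLeast hQ1 hQ u).2 hr

lemma medDist_le_dist_add_medDist (hQ1 : 1 ≤ Q) (hQ : Q ≤ #V) (u v : X) :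
    medDist V Q u ≤ dist u v + medDist V Q v := by
  refine medDist_le_of_le_card_filter hQ1 hQ
    ((le_card_filter_dist_le_medDist hQ1 hQ v).trans (card_le_card ?_))
  exact monotone_filter_right V fun w _ hw =>
    (dist_triangle u v w).trans (add_le_add_right hw _)

end MedDist

theorem stmt3_general {X : Type*} [MetricSpace X] (V : Finset X)
    (hQ : (V.card + 1) / 2 + 1 ≤ V.card)
    (v : X) :
    (∀ u ∈ V, dist u v ≤ med V v → med V u ≤ 2 * med V v) ∧
      (V.card + 1) / 2 + 1 ≤ (V.filter fun u => med V u ≤ 2 * med V v).card := by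
  have hQ1 : 1 ≤ (V.card + 1) / 2 + 1 := by omega
  have hwell : ∀ u ∈ V, dist u v ≤ med V v → med V u ≤ 2 * med V v := fun u _ huv => by
    have hlip := medDist_le_dist_add_medDist hQ1 hQ u v
    unfold med at huv ⊢
    linarith
  refine ⟨hwell, (le_card_filter_dist_le_medDist hQ1 hQ v).trans (card_le_card ?_)⟩
  intro w hw
  obtain ⟨hwV, hvw⟩ := mem_filter.mp hw
  exact mem_filter.mpr ⟨hwV, hwell w hwV (dist_comm w v ▸ hvw)⟩

/-- If `v ∈ V` attains the minimum median distance `MinMed`, then every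
`u ∈ V` with `dist u v ≤ m(v)` satisfies `m(u) ≤ 2·MinMed`, i.e. is well positioned;
consequently at least `⌈1+n/2⌉` points of `V` are well positioned. -/
theorem stmt3 {X : Type*} [MetricSpace X] (V : Finset X)
    (hQ : (V.card + 1) / 2 + 1 ≤ V.card)
    (v : X) (hv : v ∈ V) (hmin : ∀ w ∈ V, med V v ≤ med V w) :
    (∀ u ∈ V, dist u v ≤ med V v → med V u ≤ 2 * med V v) ∧
      (V.card + 1) / 2 + 1 ≤ (V.filter fun u => med V u ≤ 2 * med V v).card :=
  stmt3_general V hQ v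
end

section
/- Assume n ≥ 9. Then Σ_{v ∈ V} max_{z ∈ V} dist(z,v)/W(z) ≤ 36. -/
/-!
Write `W z = ∑ w ∈ V, dist z w`, `S = ∑ a ∈ V, W a` and `n = #V`. Summing the triangle
inequality over `V` gives `n * dist z v ≤ W z + W v` and `S ≤ 2 n W z`. If `n * dist z v > 2 W v`,
the first bound gives `W z > n * dist z v / 2`, so `dist z v / W z < 2 / n`; otherwise the second
gives `dist z v / W z ≤ 4 W v / S`. Hence every `z` has `dist z v / W z ≤ 2 / n + 4 W v / S`, and
summing over `v` bounds the sum of the maxima by `2 + 4 = 6`.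
-/

namespace Finset

variable {X : Type*} [PseudoMetricSpace X]

noncomputable def distSum (V : Finset X) (z : X) : ℝ :=
  ∑ w ∈ V, dist z w

theorem distSum_nonneg (V : Finset X) (z : X) : 0 ≤ V.distSum z :=
  sum_nonneg fun _ _ => dist_nonneg

theorem distSum_le_sum_distSum {V : Finset X} {z : X} (hz : z ∈ V) :
    V.distSum z ≤ ∑ a ∈ V, V.distSum a :=
  single_le_sum (fun a _ => V.distSum_nonneg a) hz

theorem card_mul_dist_le_distSum_add_distSum (V : Finset X) (z v : X) :
    #V * dist z v ≤ V.distSum z + V.distSum v := by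
  calc #V * dist z v = ∑ w ∈ V, dist z v := by rw [sum_const, nsmul_eq_mul]
    _ ≤ ∑ w ∈ V, (dist z w + dist v w) :=
        sum_le_sum fun w _ => dist_triangle_right z v w
    _ = V.distSum z + V.distSum v := sum_add_distrib

theorem sum_distSum_le_two_mul_card_mul_distSum (V : Finset X) (z : X) :
    ∑ a ∈ V, V.distSum a ≤ 2 * #V * V.distSum z := by
  calc ∑ a ∈ V, V.distSum a ≤ ∑ a ∈ V, ∑ b ∈ V, (dist z a + dist z b) :=
        sum_le_sum fun a _ => sum_le_sum fun b _ => dist_triangle_left a b z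
    _ = 2 * #V * V.distSum z := by
        simp only [sum_add_distrib, sum_const, nsmul_eq_mul, ← mul_sum, distSum]
        ring

theorem dist_div_distSum_le {V : Finset X} {z : X} (hz : z ∈ V) (v : X) :
    dist z v / V.distSum z ≤ 2 / #V + 4 * V.distSum v / ∑ a ∈ V, V.distSum a := by
  set n : ℝ := (#V : ℝ)
  set S := ∑ a ∈ V, V.distSum a
  have hn : 0 < n := by simpa [n] using ⟨z, hz⟩
  have hd := dist_nonneg (x := z) (y := v)
  have hWv := V.distSum_nonneg v
  rcases (V.distSum_nonneg z).eq_or_lt with hWz | hWz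
  · rw [← hWz, div_zero]
    exact add_nonneg (div_nonneg zero_le_two hn.le)
      (div_nonneg (mul_nonneg zero_le_four hWv) (sum_nonneg fun a _ => V.distSum_nonneg a))
  have hS : 0 < S := hWz.trans_le (distSum_le_sum_distSum hz)
  have htriangle := V.card_mul_dist_le_distSum_add_distSum z v
  by_cases hclose : n * dist z v ≤ 2 * V.distSum v
  · have hSle := V.sum_distSum_le_two_mul_card_mul_distSum z
    have : dist z v / V.distSum z ≤ 4 * V.distSum v / S := by
      rw [div_le_div_iff₀ hWz hS]
      linarith [mul_le_mul_of_nonneg_left hSle hd, mul_le_mul_of_nonneg_right hclose hWz.le]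
    linarith [div_nonneg zero_le_two hn.le]
  · have : dist z v / V.distSum z ≤ 2 / n := by
      rw [div_le_div_iff₀ hWz hn]
      linarith
    linarith [div_nonneg (mul_nonneg zero_le_four hWv) hS.le]

theorem sum_sup'_dist_div_distSum_le_six (V : Finset X) (hne : V.Nonempty) :
    ∑ v ∈ V, V.sup' hne (fun z => dist z v / V.distSum z) ≤ 6 := by
  set S := ∑ a ∈ V, V.distSum a
  calc ∑ v ∈ V, V.sup' hne (fun z => dist z v / V.distSum z)
      ≤ ∑ v ∈ V, (2 / #V + 4 * V.distSum v / S) :=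
        sum_le_sum fun v _ => sup'_le hne _ fun z hz => dist_div_distSum_le hz v
    _ = 2 + 4 * (S / S) := by
        rw [sum_add_distrib, sum_const, nsmul_eq_mul, ← sum_div, ← mul_sum, mul_div_assoc,
          mul_div_cancel₀ _ (Nat.cast_pos.2 hne.card_pos).ne']
    _ ≤ 2 + 4 * 1 := by gcongr; exact div_self_le_one S
    _ = 6 := by norm_num

end Finset

theorem stmt7_general {X : Type*} [MetricSpace X] (V : Finset X)
    (hne : V.Nonempty) :
    ∑ v ∈ V, (V.sup' hne fun z => dist z v / ∑ w ∈ V, dist z w) ≤ 36 :=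
  (V.sum_sup'_dist_div_distSum_le_six hne).trans (by norm_num)

/-- If `n ≥ 9`, then `Σ_{v ∈ V} max_{z ∈ V} dist(z,v)/W(z) ≤ 36`. -/
theorem stmt7 {X : Type*} [MetricSpace X] (V : Finset X) (hn : 9 ≤ V.card)
    (hne : V.Nonempty) :
    ∑ v ∈ V, (V.sup' hne fun z => dist z v / ∑ w ∈ V, dist z w) ≤ 36 :=
  stmt7_general V hne
end

section
/- Let u, z ∈ X, let c ≥ 1 and q ∈ [0,1), and suppose that at least (1−q)·n points v ∈ V satisfy dist(u,v) ≥ dist(u,z)/c (i.e., dist(u,z) is at most c times the distance of the (qn)-th closest point of V to u). Then W(u) ≤ n·dist(u,z) + W(z) ≤ (1 + 2c/(1−q))·W(u). -/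
/-!
The first inequality is the triangle inequality through `z`, summed over `V`. For the second,
the triangle inequality through `u` gives `W(z) ≤ n·d(u,z) + W(u)`, so it suffices to bound
`n·d(u,z)` by `c/(1-q)·W(u)`. This is Markov's inequality: at least `(1-q)n` points of `V` lie
at distance at least `d(u,z)/c` from `u`, so `(1-q)n·d(u,z)/c ≤ W(u)`.
-/

open Finset

theorem Finset.card_filter_nsmul_le_sum {ι M : Type*} [AddCommMonoid M] [PartialOrder M]
    [IsOrderedAddMonoid M] [DecidableLE M] (s : Finset ι) (f : ι → M) (hf : ∀ i ∈ s, 0 ≤ f i)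
    (r : M) :
    #{i ∈ s | r ≤ f i} • r ≤ ∑ i ∈ s, f i :=
  calc #{i ∈ s | r ≤ f i} • r ≤ ∑ i ∈ s with r ≤ f i, f i :=
        card_nsmul_le_sum _ _ _ fun _ hi ↦ (mem_filter.mp hi).2
    _ ≤ ∑ i ∈ s, f i :=
        sum_le_sum_of_subset_of_nonneg (filter_subset _ _) fun i hi _ ↦ hf i hi

theorem Finset.sum_dist_le_card_mul_dist_add_sum_dist {X : Type*} [PseudoMetricSpace X]
    (V : Finset X) (x y : X) :
    ∑ w ∈ V, dist x w ≤ #V * dist x y + ∑ w ∈ V, dist y w :=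
  calc ∑ w ∈ V, dist x w ≤ ∑ w ∈ V, (dist x y + dist y w) :=
        sum_le_sum fun w _ ↦ dist_triangle x y w
    _ = #V * dist x y + ∑ w ∈ V, dist y w := by
        rw [sum_add_distrib, sum_const, nsmul_eq_mul]

theorem Finset.card_mul_dist_le_of_le_card_filter {X : Type*} [PseudoMetricSpace X]
    (V : Finset X) (u z : X) {c q : ℝ} (hc : 0 < c) (hq : q < 1)
    (hrank : (1 - q) * #V ≤ #{v ∈ V | dist u z / c ≤ dist u v}) :
    #V * dist u z ≤ c / (1 - q) * ∑ w ∈ V, dist u w := by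
  have markov : (1 - q) * #V * (dist u z / c) ≤ ∑ w ∈ V, dist u w :=
    calc (1 - q) * #V * (dist u z / c)
        ≤ #{v ∈ V | dist u z / c ≤ dist u v} * (dist u z / c) := by gcongr
      _ ≤ ∑ w ∈ V, dist u w := by
        simpa only [nsmul_eq_mul] using
          V.card_filter_nsmul_le_sum (dist u ·) (fun _ _ ↦ dist_nonneg) (dist u z / c)
  rw [div_mul_eq_mul_div, le_div_iff₀ (sub_pos.mpr hq)]
  calc #V * dist u z * (1 - q) = c * ((1 - q) * #V * (dist u z / c)) := by
        field_simp
    _ ≤ c * ∑ w ∈ V, dist u w := by gcongr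

theorem stmt9_general {X : Type*} [MetricSpace X] (V : Finset X) (u z : X)
    (c q : ℝ) (hc : 1 ≤ c) (hq1 : q < 1)
    (hrank : (1 - q) * (V.card : ℝ) ≤
      ((V.filter fun v => dist u z / c ≤ dist u v).card : ℝ)) :
    (∑ w ∈ V, dist u w) ≤ (V.card : ℝ) * dist u z + ∑ w ∈ V, dist z w ∧
      (V.card : ℝ) * dist u z + ∑ w ∈ V, dist z w ≤
        (1 + 2 * c / (1 - q)) * ∑ w ∈ V, dist u w := by
  refine ⟨V.sum_dist_le_card_mul_dist_add_sum_dist u z, ?_⟩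
  have hzu := V.sum_dist_le_card_mul_dist_add_sum_dist z u
  have hnd := V.card_mul_dist_le_of_le_card_filter u z (by linarith) hq1 hrank
  rw [dist_comm z u] at hzu
  calc (#V : ℝ) * dist u z + ∑ w ∈ V, dist z w
      ≤ 2 * (#V * dist u z) + ∑ w ∈ V, dist u w := by linarith
    _ ≤ 2 * (c / (1 - q) * ∑ w ∈ V, dist u w) + ∑ w ∈ V, dist u w := by gcongr
    _ = (1 + 2 * c / (1 - q)) * ∑ w ∈ V, dist u w := by ring

/-- If `dist u z` is at most `c` times the distance of the `(qn)`-th closest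
point of `V` to `u` (i.e. at least `(1−q)·n` points `v ∈ V` have `dist u v ≥ dist u z / c`),
then `W(u) ≤ n·dist(u,z) + W(z) ≤ (1 + 2c/(1−q))·W(u)`. -/
theorem stmt9 {X : Type*} [MetricSpace X] (V : Finset X) (u z : X)
    (c q : ℝ) (hc : 1 ≤ c) (hq0 : 0 ≤ q) (hq1 : q < 1)
    (hrank : (1 - q) * (V.card : ℝ) ≤
      ((V.filter fun v => dist u z / c ≤ dist u v).card : ℝ)) :
    (∑ w ∈ V, dist u w) ≤ (V.card : ℝ) * dist u z + ∑ w ∈ V, dist z w ∧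
      (V.card : ℝ) * dist u z + ∑ w ∈ V, dist z w ≤
        (1 + 2 * c / (1 - q)) * ∑ w ∈ V, dist u w :=
  stmt9_general V u z c q hc hq1 hrank
end

section
/- Assume n ≥ 9. Then there exists a function γ : V → ℝ with γ_v ≥ 0 for all v and Σ_{v ∈ V} γ_v ≤ 2, such that for all v, z ∈ V: γ_v ≥ (1/18)·dist(z,v)/W(z). (Such γ is a set of universal PPS coefficients; one may take γ_v = max{1/n, dist(u,v)/W(u)} for a well positioned point u ∈ V.) -/
/-!
Instead of a well positioned point, take for `u` a minimiser of `W` over `V`. Summing the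
triangle inequality `d(u,z) ≤ d(u,w) + d(z,w)` over `w ∈ V` gives `n·d(u,z) ≤ W(u) + W(z) ≤ 2·W(z)`,
so with `γ_v = max{1/n, d(u,v)/W(u)}` and `d(z,v) ≤ d(u,z) + d(u,v)`,
`d(z,v)/W(z) ≤ 2/n + d(u,v)/W(u) ≤ 3·γ_v`, while `Σ_v γ_v ≤ Σ_v 1/n + Σ_v d(u,v)/W(u) ≤ 2`.
-/

open Finset

section PPSCoefficients

variable {X : Type*} [PseudoMetricSpace X]

def totalDist (V : Finset X) (z : X) : ℝ := ∑ w ∈ V, dist z w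

lemma totalDist_nonneg (V : Finset X) (z : X) : 0 ≤ totalDist V z :=
  sum_nonneg fun _ _ => dist_nonneg

lemma dist_le_totalDist {V : Finset X} {w : X} (hw : w ∈ V) (z : X) :
    dist z w ≤ totalDist V z :=
  single_le_sum (f := dist z) (fun _ _ => dist_nonneg) hw

lemma card_mul_dist_le_totalDist_add (V : Finset X) (u z : X) :
    #V * dist u z ≤ totalDist V u + totalDist V z :=
  calc (#V : ℝ) * dist u z = ∑ _w ∈ V, dist u z := by rw [sum_const, nsmul_eq_mul]
    _ ≤ ∑ w ∈ V, (dist u w + dist z w) := sum_le_sum fun w _ => dist_triangle_right u z w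
    _ = totalDist V u + totalDist V z := sum_add_distrib

lemma dist_le_div_totalDist_mul {V : Finset X} {v : X} (hv : v ∈ V) (u : X) :
    dist u v ≤ dist u v / totalDist V u * totalDist V u := by
  rcases (totalDist_nonneg V u).eq_or_lt with hW | hW
  · rw [← hW, mul_zero]
    exact hW ▸ dist_le_totalDist hv u
  · rw [div_mul_cancel₀ _ hW.ne']

noncomputable def ppsCoeff (V : Finset X) (u v : X) : ℝ := max (#V : ℝ)⁻¹ (dist u v / totalDist V u)

lemma inv_card_le_ppsCoeff (V : Finset X) (u v : X) : (#V : ℝ)⁻¹ ≤ ppsCoeff V u v :=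
  le_max_left _ _

lemma div_totalDist_le_ppsCoeff (V : Finset X) (u v : X) :
    dist u v / totalDist V u ≤ ppsCoeff V u v :=
  le_max_right _ _

lemma ppsCoeff_nonneg (V : Finset X) (u v : X) : 0 ≤ ppsCoeff V u v :=
  (inv_nonneg.mpr (Nat.cast_nonneg _)).trans (inv_card_le_ppsCoeff V u v)

lemma sum_ppsCoeff_le_two (V : Finset X) (u : X) : ∑ v ∈ V, ppsCoeff V u v ≤ 2 := by
  have hterm : ∀ v ∈ V, ppsCoeff V u v ≤ (#V : ℝ)⁻¹ + dist u v / totalDist V u := fun v _ =>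
    max_le_add_of_nonneg (inv_nonneg.mpr (Nat.cast_nonneg _))
      (div_nonneg dist_nonneg (totalDist_nonneg V u))
  have hcard : ∑ _v ∈ V, (#V : ℝ)⁻¹ ≤ 1 := by
    rw [sum_const, nsmul_eq_mul]
    exact mul_inv_le_one
  have hdist : ∑ v ∈ V, dist u v / totalDist V u ≤ 1 := by
    rw [← sum_div]
    exact div_self_le_one _
  calc ∑ v ∈ V, ppsCoeff V u v
      ≤ ∑ v ∈ V, ((#V : ℝ)⁻¹ + dist u v / totalDist V u) := sum_le_sum hterm
    _ ≤ 2 := by rw [sum_add_distrib]; linarith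

section Minimiser

variable {V : Finset X} {u : X} (hu : ∀ y ∈ V, totalDist V u ≤ totalDist V y)
include hu

lemma card_mul_dist_le_two_mul_totalDist {z : X} (hz : z ∈ V) :
    #V * dist u z ≤ 2 * totalDist V z := by
  linarith [card_mul_dist_le_totalDist_add V u z, hu z hz]

lemma dist_le_three_mul_ppsCoeff_mul_totalDist {v z : X} (hv : v ∈ V) (hz : z ∈ V) :
    dist z v ≤ 3 * ppsCoeff V u v * totalDist V z := by
  have hcard : (0 : ℝ) < #V := Nat.cast_pos.mpr (card_pos.mpr ⟨z, hz⟩)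
  have hγ := ppsCoeff_nonneg V u v
  have hfar : dist u z ≤ 2 * ppsCoeff V u v * totalDist V z :=
    calc dist u z = (#V : ℝ)⁻¹ * (#V * dist u z) := by field_simp
      _ ≤ ppsCoeff V u v * (2 * totalDist V z) :=
        mul_le_mul (inv_card_le_ppsCoeff V u v) (card_mul_dist_le_two_mul_totalDist hu hz)
          (by positivity) hγ
      _ = 2 * ppsCoeff V u v * totalDist V z := by ring
  have hnear : dist u v ≤ ppsCoeff V u v * totalDist V z :=
    calc dist u v ≤ dist u v / totalDist V u * totalDist V u := dist_le_div_totalDist_mul hv u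
      _ ≤ ppsCoeff V u v * totalDist V z :=
        mul_le_mul (div_totalDist_le_ppsCoeff V u v) (hu z hz) (totalDist_nonneg V u) hγ
  calc dist z v ≤ dist u z + dist u v := dist_triangle_left z v u
    _ ≤ 3 * ppsCoeff V u v * totalDist V z := by linarith

lemma dist_div_totalDist_le_three_mul_ppsCoeff {v z : X} (hv : v ∈ V) (hz : z ∈ V) :
    dist z v / totalDist V z ≤ 3 * ppsCoeff V u v :=
  div_le_of_le_mul₀ (totalDist_nonneg V z) (by linarith [ppsCoeff_nonneg V u v])
    (dist_le_three_mul_ppsCoeff_mul_totalDist hu hv hz)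

end Minimiser

end PPSCoefficients

theorem stmt19_general {X : Type*} [MetricSpace X] (V : Finset X) :
    ∃ γ : X → ℝ,
      (∀ v ∈ V, 0 ≤ γ v) ∧
        (∑ v ∈ V, γ v) ≤ 2 ∧
          ∀ v ∈ V, ∀ z ∈ V,
            (1 / 18) * (dist z v / ∑ w ∈ V, dist z w) ≤ γ v := by
  rcases V.eq_empty_or_nonempty with rfl | hV
  · exact ⟨0, by simp⟩
  obtain ⟨u, -, hu⟩ := V.exists_min_image (totalDist V) hV
  refine ⟨ppsCoeff V u, fun v _ => ppsCoeff_nonneg V u v, sum_ppsCoeff_le_two V u,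
    fun v hv z hz => ?_⟩
  have hbound := dist_div_totalDist_le_three_mul_ppsCoeff hu hv hz
  have hγ := ppsCoeff_nonneg V u v
  unfold totalDist at hbound
  linarith

/-- If `n ≥ 9`, then there exist universal PPS coefficients: a function
`γ : V → ℝ` with `γ_v ≥ 0`, `Σ_{v ∈ V} γ_v ≤ 2`, and
`γ_v ≥ (1/18)·dist(z,v)/W(z)` for all `v, z ∈ V`. -/
theorem stmt19 {X : Type*} [MetricSpace X] (V : Finset X) (hn : 9 ≤ V.card) :
    ∃ γ : X → ℝ,
      (∀ v ∈ V, 0 ≤ γ v) ∧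
        (∑ v ∈ V, γ v) ≤ 2 ∧
          ∀ v ∈ V, ∀ z ∈ V,
            (1 / 18) * (dist z v / ∑ w ∈ V, dist z w) ≤ γ v :=
  stmt19_general V
end
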